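/- arXiv:2106.03288 — 2 statements merged into one kernel-verified Lean document; each statement's English description precedes it below -/
import Mathlib

section
/- Let Q be a finite acyclic quiver. If w : Q₁ → ℝ_{≥0} is a regular flow that is a vertex of the flow polytope Δ(θ) for θ = inc(w), then the support of w (the set of arrows a with w(a) ≠ 0) contains no cycle of the underlying undirected graph; i.e., the support is a forest. -/
/-
A nontrivial circulation `c` supported on the support of `w` lets us move from `w` in both
directions `w ± t • c` without leaving the flow polytope: the incidence vector does not change,
and for small `t > 0` every coordinate stays nonnegative because `w > 0` wherever `c ≠ 0`.
Then `w` is the midpoint of the two distinct points `w ± t • c`, so it is not a vertex.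
-/

open Filter Topology

def incR {V A : Type*} [Fintype A] [DecidableEq V] (hd tl : A → V) (w : A → ℝ) (i : V) : ℝ :=
  (∑ a, if hd a = i then w a else 0) - (∑ a, if tl a = i then w a else 0)

theorem incR_add_smul {V A : Type*} [Fintype A] [DecidableEq V] (hd tl : A → V)
    (w c : A → ℝ) (t : ℝ) (i : V) :
    incR hd tl (w + t • c) i = incR hd tl w i + t * incR hd tl c i := by
  simp only [incR, ← Finset.sum_filter, Pi.add_apply, Pi.smul_apply, smul_eq_mul,
    Finset.sum_add_distrib, ← Finset.mul_sum]
  ring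

theorem eventually_nonneg_add_smul {A : Type*} [Finite A] {w c : A → ℝ}
    (hw : ∀ a, 0 ≤ w a) (hc : ∀ a, c a ≠ 0 → w a ≠ 0) :
    ∀ᶠ t in 𝓝 (0 : ℝ), ∀ a, 0 ≤ (w + t • c) a := by
  refine eventually_all.2 fun a => ?_
  by_cases hca : c a = 0
  · exact Eventually.of_forall fun t => by simp [hca, hw a]
  · have hpos : 0 < w a := (hw a).lt_of_ne' (hc a hca)
    have hlim : Tendsto (fun t : ℝ => (w + t • c) a) (𝓝 0) (𝓝 (w a)) := by
      simpa using
        (tendsto_const_nhds (x := w a)).add ((tendsto_id (x := 𝓝 (0 : ℝ))).mul_const (c a))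
    exact (hlim.eventually (lt_mem_nhds hpos)).mono fun _ => le_of_lt

theorem exists_pos_nonneg_add_smul_neg {A : Type*} [Finite A] {w c : A → ℝ}
    (hw : ∀ a, 0 ≤ w a) (hc : ∀ a, c a ≠ 0 → w a ≠ 0) :
    ∃ t : ℝ, 0 < t ∧ (∀ a, 0 ≤ (w + t • c) a) ∧ ∀ a, 0 ≤ (w + (-t) • c) a := by
  have h := eventually_nonneg_add_smul hw hc
  have hsymm := h.and (((continuous_neg (G := ℝ)).tendsto' 0 0 neg_zero).eventually h)
  obtain ⟨t, ⟨hu, hv⟩, ht⟩ :=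
    ((hsymm.filter_mono nhdsWithin_le_nhds).and self_mem_nhdsWithin).exists (f := 𝓝[>] 0)
  exact ⟨t, ht, hu, hv⟩

theorem stmt10_general {V A : Type*} [Fintype A] [DecidableEq V] (hd tl : A → V)
    (w : A → ℝ) (hw : ∀ a, 0 ≤ w a)
    (hvert : ∀ u v : A → ℝ,
      (∀ a, 0 ≤ u a) → (∀ i, incR hd tl u i = incR hd tl w i) →
      (∀ a, 0 ≤ v a) → (∀ i, incR hd tl v i = incR hd tl w i) →
      ∀ s : ℝ, 0 < s → s < 1 → w = s • u + (1 - s) • v → u = v) :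
    ¬ ∃ c : A → ℝ, c ≠ 0 ∧ (∀ i, incR hd tl c i = 0) ∧ ∀ a, c a ≠ 0 → w a ≠ 0 := by
  rintro ⟨c, hc, hcirc, hsupp⟩
  obtain ⟨t, ht, hu, hv⟩ := exists_pos_nonneg_add_smul_neg hw hsupp
  have hinc (s : ℝ) (i : V) : incR hd tl (w + s • c) i = incR hd tl w i := by
    rw [incR_add_smul, hcirc, mul_zero, add_zero]
  have heq := hvert _ _ hu (hinc t) hv (hinc (-t)) (1 / 2) (by norm_num) (by norm_num)
    (by ext; simp only [Pi.add_apply, Pi.smul_apply, smul_eq_mul]; ring)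
  have h2t : (2 * t) • c = 0 := by
    rw [mul_smul, two_smul, ← sub_eq_zero.2 (add_left_cancel heq)]
    simp only [neg_smul, sub_neg_eq_add]
  exact hc ((smul_eq_zero.1 h2t).resolve_left (by positivity))

/-- If a regular flow `w` is a vertex of the flow polytope `Δ(inc w)` (not a proper
convex combination of two distinct points of the polytope), then there is no nontrivial
circulation supported on the support of `w`; i.e. the support of `w` contains no
undirected cycle. -/
theorem stmt10 {V A : Type*} [Fintype V] [Fintype A] [DecidableEq V] (hd tl : A → V)
    (hacyc : ¬ ∃ i : V, Relation.TransGen (fun x y => ∃ a, tl a = x ∧ hd a = y) i i)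
    (w : A → ℝ) (hw : ∀ a, 0 ≤ w a)
    (hvert : ∀ u v : A → ℝ,
      (∀ a, 0 ≤ u a) → (∀ i, incR hd tl u i = incR hd tl w i) →
      (∀ a, 0 ≤ v a) → (∀ i, incR hd tl v i = incR hd tl w i) →
      ∀ s : ℝ, 0 < s → s < 1 → w = s • u + (1 - s) • v → u = v) :
    ¬ ∃ c : A → ℝ, c ≠ 0 ∧ (∀ i, incR hd tl c i = 0) ∧ ∀ a, c a ≠ 0 → w a ≠ 0 :=
  stmt10_general hd tl w hw hvert
end

section
/- Let Q be a finite acyclic quiver with flow w : Q₁ → ℝ_{≥0} and θ = inc(w). For the subquiver P = Supp(w) (with P₀ = Q₀ and P₁ = {a : w(a) ≠ 0}), and for every P-successor closed subset V ⊆ Q₀, one has Σ_{i∈V} θ(i) ≥ 0, i.e., the support of any regular flow with weight θ is θ-semistable. -/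
/- Summing `inc(w)` over `W` counts each arrow once for entering `W` and once for leaving it,
so arrows with both ends in `W` cancel. When `W` is closed under the support of `w ≥ 0`,
no arrow of positive weight leaves `W`, and every remaining term is nonnegative. -/

theorem sum_incR_eq_sum_arrows {V A : Type*} [Fintype A] [DecidableEq V] (hd tl : A → V)
    (w : A → ℝ) (W : Finset V) :
    ∑ i ∈ W, incR hd tl w i
      = ∑ a, ((if hd a ∈ W then w a else 0) - (if tl a ∈ W then w a else 0)) := by
  simp only [incR, Finset.sum_sub_distrib]
  rw [Finset.sum_comm (s := W), Finset.sum_comm (s := W)]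
  simp only [Finset.sum_ite_eq]

theorem arrow_boundary_nonneg {V A : Type*} [DecidableEq V] (hd tl : A → V) (w : A → ℝ)
    (W : Finset V) (a : A) (hwa : 0 ≤ w a) (hclosed : w a ≠ 0 → tl a ∈ W → hd a ∈ W) :
    0 ≤ (if hd a ∈ W then w a else 0) - (if tl a ∈ W then w a else 0) := by
  by_cases htl : tl a ∈ W
  · rcases eq_or_ne (w a) 0 with hzero | hpos
    · simp [hzero]
    · simp [htl, hclosed hpos htl]
  · simp only [htl, if_false, sub_zero]
    split_ifs <;> simp [hwa]

theorem stmt16_general {V A : Type*} [Fintype A] [DecidableEq V] (hd tl : A → V)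
    (w : A → ℝ) (hw : ∀ a, 0 ≤ w a) :
    ∀ W : Finset V, (∀ a : A, w a ≠ 0 → tl a ∈ W → hd a ∈ W) →
      0 ≤ ∑ i ∈ W, incR hd tl w i := by
  intro W hW
  rw [sum_incR_eq_sum_arrows]
  exact Finset.sum_nonneg fun a _ => arrow_boundary_nonneg hd tl w W a (hw a) (hW a)

/-- For a regular flow `w ≥ 0` with weight `θ = inc(w)` on a finite acyclic quiver, the
support subquiver `P = Supp(w)` is θ-semistable: every `P`-successor closed subset `W`
of vertices satisfies `Σ_{i∈W} θ i ≥ 0`. -/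
theorem stmt16 {V A : Type*} [Fintype V] [Fintype A] [DecidableEq V] (hd tl : A → V)
    (hacyc : ¬ ∃ i : V, Relation.TransGen (fun x y => ∃ a, tl a = x ∧ hd a = y) i i)
    (w : A → ℝ) (hw : ∀ a, 0 ≤ w a) :
    ∀ W : Finset V, (∀ a : A, w a ≠ 0 → tl a ∈ W → hd a ∈ W) →
      0 ≤ ∑ i ∈ W, incR hd tl w i :=
  stmt16_general hd tl w hw
end
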